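/- arXiv:0812.2553 — 3 statements merged into one kernel-verified Lean document; each statement's English description precedes it below -/
import Mathlib

section
/- For every integer p ≥ 0, every odd positive integer m, and every real number x, the Euler function satisfies Ē_p(mx) = m^p · Σ_{s=0}^{m−1} (−1)^s Ē_p(x + s/m). -/
open Finset

/-- The Euler numbers `E_n`, defined by `E_0 = 1` and the recurrence
`∑_{l=0}^{n} C(n,l) E_l + E_n = 0` for `n ≥ 1`. -/
def eulerNumber : ℕ → ℚ
  | 0 => 1
  | n + 1 => -(∑ l : Fin (n + 1), ((n + 1).choose l : ℚ) * eulerNumber l) / 2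

/-- The Euler polynomials `E_n(x) = ∑_{l=0}^{n} C(n,l) E_l x^{n-l}`. -/
noncomputable def eulerPoly (n : ℕ) (x : ℝ) : ℝ :=
  ∑ l ∈ Finset.range (n + 1), (n.choose l : ℝ) * (eulerNumber l : ℝ) * x ^ (n - l)

/-- The Euler function `Ē_p(x) = (-1)^⌊x⌋ E_p(x - ⌊x⌋)`. -/
noncomputable def eulerFun (p : ℕ) (x : ℝ) : ℝ := (-1 : ℝ) ^ ⌊x⌋ * eulerPoly p (x - ⌊x⌋)

/-- The Dedekind-type DC sum `T_p(h,k) = 2 ∑_{u=1}^{k-1} (-1)^{u-1} (u/k) Ē_p(hu/k)`. -/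
noncomputable def dcSum (p h k : ℕ) : ℝ :=
  2 * ∑ u ∈ Finset.Ico 1 k, (-1 : ℝ) ^ (u - 1) * ((u : ℝ) / k) * eulerFun p (h * u / k)

/-! The defect `Ē_p(m y) - m^p ∑_s (-1)^s Ē_p(y + s/m)` is antiperiodic with antiperiod `1/m`:
for the first term because `Ē_p(z + 1) = -Ē_p(z)`, and for the sum because, `m` being odd,
`∑_{s<m} (-1)^s (g(s) + g(s+1))` telescopes to `g(0) + g(m)`. Hence it suffices that the defect
vanishes on `[0, 1/m)`, where it coincides with the defect of the polynomial `E_p`. The same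
computation, now with `E_p(z + 1) + E_p(z) = 2 z^p`, shows that the polynomial defect is
antiperiodic too, and an antiperiodic polynomial is zero. -/

open Polynomial Function

theorem sum_choose_mul_eulerNumber_add (n : ℕ) :
    ∑ l ∈ range (n + 1), (n.choose l : ℝ) * eulerNumber l + eulerNumber n =
      if n = 0 then 2 else 0 := by
  rcases n with _ | n
  · norm_num [eulerNumber]
  · have h : (eulerNumber (n + 1) : ℝ) =
        -(∑ l ∈ range (n + 1), ((n + 1).choose l : ℝ) * eulerNumber l) / 2 := by
      rw [eulerNumber,
        ← Fin.sum_univ_eq_sum_range (fun l => ((n + 1).choose l : ℝ) * eulerNumber l)]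
      push_cast
      rfl
    rw [sum_range_succ, Nat.choose_self, h]
    simp only [Nat.cast_one, one_mul, Nat.add_eq_zero_iff, one_ne_zero, and_false, ↓reduceIte]
    ring

theorem choose_mul_choose_sub_comm (p l j : ℕ) :
    p.choose l * (p - l).choose j = p.choose j * (p - j).choose l := by
  have hl := Nat.choose_mul (n := p) (Nat.le_add_right l j)
  have hj := Nat.choose_mul (n := p) (Nat.le_add_left j l)
  rw [Nat.add_sub_cancel_left] at hl
  rw [Nat.add_sub_cancel] at hj
  rw [← hl, ← hj, Nat.choose_symm_add]

theorem eulerPoly_add_one_add (p : ℕ) (x : ℝ) :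
    eulerPoly p (x + 1) + eulerPoly p x = 2 * x ^ p := by
  have hshift : eulerPoly p (x + 1) = ∑ j ∈ range (p + 1), (p.choose j : ℝ) * x ^ j *
      ∑ l ∈ range (p - j + 1), ((p - j).choose l : ℝ) * eulerNumber l := by
    calc eulerPoly p (x + 1)
        = ∑ l ∈ range (p + 1), ∑ j ∈ range (p - l + 1),
            (p.choose l * (p - l).choose j : ℕ) * (eulerNumber l : ℝ) * x ^ j := by
          simp only [eulerPoly, add_pow, one_pow, mul_sum]
          refine sum_congr rfl fun l _ => sum_congr rfl fun j _ => ?_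
          push_cast
          ring
      _ = ∑ j ∈ range (p + 1), ∑ l ∈ range (p - j + 1),
            (p.choose l * (p - l).choose j : ℕ) * (eulerNumber l : ℝ) * x ^ j :=
          sum_comm' fun l j => by simp only [mem_range]; omega
      _ = _ := by
          simp only [choose_mul_choose_sub_comm p _ _, mul_sum]
          refine sum_congr rfl fun j _ => sum_congr rfl fun l _ => ?_
          push_cast
          ring
  have hreflect : eulerPoly p x =
      ∑ j ∈ range (p + 1), (p.choose j : ℝ) * x ^ j * eulerNumber (p - j) := by
    rw [eulerPoly, ← sum_range_reflect]
    refine sum_congr rfl fun l hl => ?_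
    have hlp : l ≤ p := Nat.lt_succ_iff.mp (mem_range.mp hl)
    rw [Nat.add_sub_cancel, Nat.sub_sub_self hlp, Nat.choose_symm hlp]
    ring
  rw [hshift, hreflect, ← sum_add_distrib]
  simp only [← mul_add, sum_choose_mul_eulerNumber_add]
  rw [sum_range_succ, sum_eq_zero fun j hj => by
    simp [Nat.sub_eq_zero_iff_le, not_le.mpr (mem_range.mp hj)]]
  simp only [Nat.choose_self, Nat.cast_one, one_mul, tsub_self, ↓reduceIte, zero_add]
  ring

theorem eulerFun_antiperiodic (p : ℕ) : Antiperiodic (eulerFun p) 1 := by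
  intro x
  rw [eulerFun, eulerFun, Int.floor_add_one, zpow_add_one₀ (by norm_num), Int.cast_add,
    Int.cast_one, add_sub_add_right_eq_sub]
  ring

theorem eulerFun_eq_eulerPoly {p : ℕ} {x : ℝ} (hx : x ∈ Set.Ico 0 1) :
    eulerFun p x = eulerPoly p x := by
  simp [eulerFun, Int.floor_eq_zero_iff.mpr hx]

noncomputable def eulerPolynomial (n : ℕ) : ℝ[X] :=
  ∑ l ∈ range (n + 1), C ((n.choose l : ℝ) * eulerNumber l) * X ^ (n - l)

theorem eval_eulerPolynomial (n : ℕ) (x : ℝ) : (eulerPolynomial n).eval x = eulerPoly n x := by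
  simp [eulerPolynomial, eulerPoly, eval_finsetSum]

theorem Function.Antiperiodic.eq_zero_of_forall_mem_Ico {α β : Type*} [AddCommGroup α]
    [LinearOrder α] [IsOrderedAddMonoid α] [Archimedean α] [SubtractionMonoid β]
    {f : α → β} {c : α} (hf : Antiperiodic f c) (hc : 0 < c)
    (hzero : ∀ y ∈ Set.Ico 0 c, f y = 0) (x : α) : f x = 0 := by
  have hx : x = toIcoMod hc 0 x + toIcoDiv hc 0 x • c := by
    rw [← self_sub_toIcoDiv_zsmul, sub_add_cancel]
  rw [hx, hf.add_zsmul_eq, hzero _ (by simpa using toIcoMod_mem_Ico' hc x), smul_zero]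

theorem Polynomial.eq_zero_of_antiperiodic {R : Type*} [CommRing R] [IsDomain R] [CharZero R]
    {q : R[X]} {c : R} (hc : c ≠ 0) (hq : Antiperiodic q.eval c) : q = 0 := by
  have hconst : q = C (q.eval 0) := by
    rw [← sub_eq_zero]
    refine eq_zero_of_infinite_isRoot _ (Set.infinite_of_injective_forall_mem
      (f := fun n : ℕ => n * (2 * c)) ?_ fun n => ?_)
    · intro a b hab
      exact_mod_cast mul_right_cancel₀ (mul_ne_zero two_ne_zero hc) hab
    · simp [hq.periodic_two_mul.nat_mul_eq n]
  have h0 : q.eval c = -q.eval 0 := hq.eq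
  rw [hconst, eval_C, eval_C, self_eq_neg] at h0
  rw [hconst, h0, C_0]

noncomputable def mulDefect (f : ℝ → ℝ) (p m : ℕ) (y : ℝ) : ℝ :=
  f (m * y) - m ^ p * ∑ s ∈ range m, (-1) ^ s * f (y + s / m)

theorem sum_range_neg_one_pow_mul_add_succ {R : Type*} [CommRing R] (g : ℕ → R) {m : ℕ}
    (hm : Odd m) : ∑ s ∈ range m, (-1) ^ s * (g s + g (s + 1)) = g 0 + g m := by
  convert sum_range_sub' (fun s => (-1 : R) ^ s * g s) m using 1
  · exact sum_congr rfl fun s _ => by ring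
  · simp [hm.neg_one_pow]

theorem mulDefect_antiperiodic {f : ℝ → ℝ} {p m : ℕ} (hm : Odd m) {c : ℝ}
    (hf : ∀ z, f (z + 1) + f z = c * z ^ p) : Antiperiodic (mulDefect f p m) (1 / m) := by
  intro y
  have hm0 : (m : ℝ) ≠ 0 := by exact_mod_cast hm.pos.ne'
  have hsum := sum_range_neg_one_pow_mul_add_succ (fun s : ℕ => f (y + s / m)) hm
  simp only [mul_add, sum_add_distrib, Nat.cast_zero, zero_div, add_zero, div_self hm0] at hsum
  have hshift (s : ℕ) : y + 1 / m + s / m = y + ((s + 1 : ℕ) : ℝ) / m := by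
    push_cast
    ring
  rw [mulDefect, mulDefect, mul_add, mul_one_div_cancel hm0]
  simp only [hshift]
  linear_combination hf (m * y) - m ^ p * hf y - m ^ p * hsum

theorem mulDefect_eulerPoly (p : ℕ) {m : ℕ} (hm : Odd m) : mulDefect (eulerPoly p) p m = 0 := by
  set Q : ℝ[X] := (eulerPolynomial p).comp (C (m : ℝ) * X) - C ((m : ℝ) ^ p) *
    ∑ s ∈ range m, C ((-1) ^ s) * (eulerPolynomial p).comp (X + C ((s : ℝ) / m))
  have hQ : Q.eval = mulDefect (eulerPoly p) p m := by
    ext y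
    simp [Q, mulDefect, eval_finsetSum, eval_eulerPolynomial]
  have hm0 : (m : ℝ) ≠ 0 := by exact_mod_cast hm.pos.ne'
  have hanti := mulDefect_antiperiodic hm (eulerPoly_add_one_add p)
  have hQ0 : Q = 0 := Polynomial.eq_zero_of_antiperiodic (one_div_ne_zero hm0) (hQ ▸ hanti)
  rw [← hQ, hQ0]
  ext
  simp

theorem mulDefect_eqOn {f g : ℝ → ℝ} (hfg : Set.EqOn f g (Set.Ico 0 1)) (p m : ℕ) :
    Set.EqOn (mulDefect f p m) (mulDefect g p m) (Set.Ico 0 (1 / m)) := by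
  rintro y ⟨hy0, hy1⟩
  have hm : (0 : ℝ) < m := one_div_pos.mp (hy0.trans_lt hy1)
  have hmy : (m : ℝ) * y < 1 := (lt_div_iff₀' hm).mp hy1
  have hshift (s : ℕ) (hs : s < m) : y + s / m < 1 :=
    calc y + s / m < 1 / m + s / m := by gcongr
      _ = (s + 1 : ℕ) / m := by push_cast; ring
      _ ≤ 1 := (div_le_one hm).mpr (by exact_mod_cast hs)
  rw [mulDefect, mulDefect, hfg ⟨by positivity, hmy⟩]
  congr 2
  exact sum_congr rfl fun s hs => by rw [hfg ⟨by positivity, hshift s (mem_range.mp hs)⟩]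

theorem mulDefect_eulerFun (p : ℕ) {m : ℕ} (hm : Odd m) : mulDefect (eulerFun p) p m = 0 := by
  have hm0 : (0 : ℝ) < m := by exact_mod_cast hm.pos
  funext x
  refine (mulDefect_antiperiodic hm (c := 0) fun z => ?_).eq_zero_of_forall_mem_Ico (by positivity)
    (fun y hy => ?_) x
  · rw [eulerFun_antiperiodic, neg_add_cancel, zero_mul]
  · rw [mulDefect_eqOn (fun z hz => eulerFun_eq_eulerPoly hz) p m hy, mulDefect_eulerPoly p hm,
      Pi.zero_apply]

theorem eulerFun_mul_general (p m : ℕ) (hmodd : Odd m) (x : ℝ) :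
    eulerFun p ((m : ℝ) * x) =
      (m : ℝ) ^ p * ∑ s ∈ Finset.range m, (-1 : ℝ) ^ s * eulerFun p (x + (s : ℝ) / m) :=
  sub_eq_zero.mp (congrFun (mulDefect_eulerFun p hmodd) x)

/-- Multiplication theorem for the Euler function: for odd positive `m`,
`Ē_p(mx) = m^p ∑_{s=0}^{m−1} (−1)^s Ē_p(x + s/m)`. -/
theorem eulerFun_mul (p m : ℕ) (hm : 0 < m) (hmodd : Odd m) (x : ℝ) :
    eulerFun p ((m : ℝ) * x) =
      (m : ℝ) ^ p * ∑ s ∈ Finset.range m, (-1 : ℝ) ^ s * eulerFun p (x + (s : ℝ) / m) :=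
  eulerFun_mul_general p m hmodd x
end

section
/- (Lemma 1) For every odd integer p ≥ 1, one has Σ_{s=0}^{p} C(p,s) E_s / (p − s + 2) = 2 E_{p+2} / ((p+1)(p+2)), where E_s denotes the s-th Euler number. -/
open Finset

/-!
The generating function `f(t) = ∑ E_n tⁿ/n!` satisfies `f(t)(eᵗ + 1) = 2`, hence
`f(t) + f(-t) = 2`, so `E_n = 0` for even `n ≥ 2`; in particular `E_{p+1} = 0`.
Writing `C(p,s)/(p-s+2) = ((p+2) C(p+1,s) - C(p+2,s)) / ((p+1)(p+2))`, the sum splits into two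
truncated instances of the defining recurrence `∑_{l<n} C(n,l) E_l = -2 E_n`, for `n = p+1` and
`n = p+2`.
-/

open Nat PowerSeries

theorem sum_range_choose_mul_eulerNumber (n : ℕ) :
    ∑ l ∈ range (n + 1), ((n + 1).choose l : ℚ) * eulerNumber l = -2 * eulerNumber (n + 1) := by
  rw [eulerNumber, ← Fin.sum_univ_eq_sum_range (fun l => ((n + 1).choose l : ℚ) * eulerNumber l)]
  ring

theorem coeff_mk_div_factorial_mul_exp (a : ℕ → ℚ) (n : ℕ) :
    coeff n (mk (fun k => a k / k !) * exp ℚ) = (∑ l ∈ range (n + 1), n.choose l * a l) / n ! := by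
  rw [coeff_mul, Nat.sum_antidiagonal_eq_sum_range_succ_mk, sum_div]
  refine sum_congr rfl fun l hl => ?_
  rw [coeff_mk, coeff_exp, Algebra.algebraMap_self, RingHom.id_apply,
    Nat.cast_choose ℚ (mem_range_succ_iff.mp hl)]
  field_simp

noncomputable def eulerSeries : ℚ⟦X⟧ := mk fun n => eulerNumber n / n !

theorem eulerSeries_mul_exp_add_one : eulerSeries * (exp ℚ + 1) = 2 := by
  rw [← map_ofNat C 2]
  ext (_ | n)
  · simp [eulerSeries, eulerNumber]
    norm_num
  rw [mul_add, mul_one, map_add, eulerSeries, coeff_mk_div_factorial_mul_exp, sum_range_succ,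
    sum_range_choose_mul_eulerNumber, coeff_mk, coeff_C, if_neg n.succ_ne_zero, choose_self]
  ring

theorem evalNegHom_eulerSeries : evalNegHom eulerSeries = 2 - eulerSeries := by
  have hne : exp ℚ + 1 ≠ 0 := fun h => by
    simpa using congrArg constantCoeff h
  refine mul_right_cancel₀ hne ?_
  have := congrArg (fun f => evalNegHom f * exp ℚ) eulerSeries_mul_exp_add_one
  simp only [map_mul, map_add, map_one, map_ofNat] at this
  linear_combination this - evalNegHom eulerSeries * exp_mul_exp_neg_eq_one (A := ℚ) +
    eulerSeries_mul_exp_add_one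

theorem eulerNumber_eq_zero_of_even {n : ℕ} (hn : Even n) (h0 : n ≠ 0) : eulerNumber n = 0 := by
  have := congrArg (coeff n) evalNegHom_eulerSeries
  rw [← map_ofNat C, map_sub, coeff_C, if_neg h0, evalNegHom, coeff_rescale, hn.neg_one_pow] at this
  simpa [eulerSeries, factorial_ne_zero, self_eq_neg] using this

theorem choose_div_sub_add_two {p s : ℕ} (h : s ≤ p) :
    (p.choose s : ℚ) / (p - s + 2) =
      ((p + 2) * (p + 1).choose s - (p + 2).choose s) / ((p + 1) * (p + 2)) := by
  have h₁ := congrArg (Nat.cast (R := ℚ)) (choose_mul_succ_eq p s)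
  have h₂ := congrArg (Nat.cast (R := ℚ)) (choose_mul_succ_eq (p + 1) s)
  push_cast [Nat.cast_sub (show s ≤ p + 1 by omega), Nat.cast_sub (show s ≤ p + 1 + 1 by omega)]
    at h₁ h₂
  have hs : (s : ℚ) ≤ p := by exact_mod_cast h
  rw [div_eq_div_iff (by linarith) (by positivity)]
  linear_combination (p + 2) * h₁ - h₂

theorem eulerNumber_sum_div_general (p : ℕ) (hpodd : Odd p) :
    ∑ s ∈ Finset.range (p + 1), (p.choose s : ℚ) * eulerNumber s / ((p : ℚ) - s + 2) =
      2 * eulerNumber (p + 2) / (((p : ℚ) + 1) * ((p : ℚ) + 2)) := by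
  have hE : eulerNumber (p + 1) = 0 := eulerNumber_eq_zero_of_even hpodd.add_one p.succ_ne_zero
  have h₁ := sum_range_choose_mul_eulerNumber p
  have h₂ := sum_range_choose_mul_eulerNumber (p + 1)
  rw [sum_range_succ, hE, mul_zero, add_zero] at h₂
  calc ∑ s ∈ range (p + 1), (p.choose s : ℚ) * eulerNumber s / (p - s + 2)
      = ∑ s ∈ range (p + 1), ((p + 2) * ((p + 1).choose s * eulerNumber s) -
          (p + 2).choose s * eulerNumber s) / ((p + 1) * (p + 2)) :=
        sum_congr rfl fun s hs => by
          rw [mul_div_right_comm, choose_div_sub_add_two (mem_range_succ_iff.mp hs)]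
          ring
    _ = 2 * eulerNumber (p + 2) / ((p + 1) * (p + 2)) := by
        rw [← sum_div, sum_sub_distrib, ← mul_sum, h₁, h₂, hE]
        ring

/-- Lemma 1: for odd `p ≥ 1`,
`∑_{s=0}^{p} C(p,s) E_s / (p − s + 2) = 2 E_{p+2} / ((p+1)(p+2))`. -/
theorem eulerNumber_sum_div (p : ℕ) (hp : 1 ≤ p) (hpodd : Odd p) :
    ∑ s ∈ Finset.range (p + 1), (p.choose s : ℚ) * eulerNumber s / ((p : ℚ) - s + 2) =
      2 * eulerNumber (p + 2) / (((p : ℚ) + 1) * ((p : ℚ) + 2)) :=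
  eulerNumber_sum_div_general p hpodd
end

section
/- (Fourier expansion of the Euler function) For every integer m ≥ 1 and every real number x, one has Ē_m(x) = 2 · m! · Σ_{n ∈ ℤ} e^{(2n+1)πix} / ((2n+1)πi)^{m+1}, where the series over all integers n converges absolutely. -/
open Finset

/-!
The periodic Bernoulli functions have the classical Fourier expansions
`B̄_k(y) = -k!/(2πi)^k ∑_{n ≠ 0} e^{2πiny}/n^k` (`k ≥ 2`), and the Euler function is a difference
of two of them: `Ē_m(x) = 2^(m+1)/(m+1) · (B̄_{m+1}((x+1)/2) - B̄_{m+1}(x/2))`. Subtracting the two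
series kills the even frequencies and doubles the odd ones.

The identity between Euler and Bernoulli polynomials holds because both sides form Appell sequences
(`p_{n+1}' = (n+1) p_n`, `p_0 = 1`) with `p_n(1) + p_n(0) = 0` for `n ≥ 1`, which determines them.
The periodic version follows since both sides change sign under `x ↦ x + 1`.
-/

open Complex Nat
open scoped Real

lemma eulerNumber_succ (n : ℕ) :
    2 * (eulerNumber (n + 1) : ℝ) =
      -∑ l ∈ range (n + 1), ((n + 1).choose l : ℝ) * eulerNumber l := by
  rw [eulerNumber, ← Fin.sum_univ_eq_sum_range (fun l => ((n + 1).choose l : ℝ) * eulerNumber l)]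
  push_cast
  ring

@[simp]
lemma eulerPoly_zero (x : ℝ) : eulerPoly 0 x = 1 := by
  simp [eulerPoly, eulerNumber]

lemma eulerPoly_one_add_eulerPoly_zero (n : ℕ) : eulerPoly (n + 1) 1 + eulerPoly (n + 1) 0 = 0 := by
  have h0 : eulerPoly (n + 1) 0 = eulerNumber (n + 1) := by
    rw [eulerPoly, sum_range_succ, sum_eq_zero fun l hl => by
      rw [zero_pow (by simp at hl; omega), mul_zero]]
    simp
  have h1 : eulerPoly (n + 1) 1 =
      ∑ l ∈ range (n + 1), ((n + 1).choose l : ℝ) * eulerNumber l + eulerNumber (n + 1) := by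
    simp [eulerPoly, sum_range_succ]
  linarith [eulerNumber_succ n]

lemma hasDerivAt_eulerPoly (n : ℕ) (x : ℝ) :
    HasDerivAt (eulerPoly (n + 1)) ((n + 1) * eulerPoly n x) x := by
  have h := HasDerivAt.fun_sum fun l (_ : l ∈ range (n + 2)) =>
    ((hasDerivAt_pow (n + 1 - l) x).const_mul (((n + 1).choose l : ℝ) * eulerNumber l))
  refine h.congr_deriv ?_
  rw [sum_range_succ, Nat.sub_self, Nat.cast_zero, zero_mul, mul_zero, add_zero, eulerPoly,
    mul_sum]
  refine sum_congr rfl fun l hl => ?_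
  have hl : l ≤ n := Nat.lt_succ_iff.mp (mem_range.mp hl)
  have hchoose : ((n + 1).choose l : ℝ) * ((n + 1 - l : ℕ) : ℝ) = (n + 1) * n.choose l := by
    exact_mod_cast ((Nat.choose_mul_succ_eq n l).symm.trans (Nat.mul_comm _ _))
  rw [show n + 1 - l - 1 = n - l by omega]
  linear_combination ((eulerNumber l : ℝ) * x ^ (n - l)) * hchoose

lemma eq_of_hasDerivAt_of_add_eq_zero {f g : ℕ → ℝ → ℝ} (h0 : f 0 = g 0)
    (hf : ∀ n x, HasDerivAt (f (n + 1)) ((n + 1) * f n x) x)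
    (hg : ∀ n x, HasDerivAt (g (n + 1)) ((n + 1) * g n x) x)
    (hf1 : ∀ n, f (n + 1) 1 + f (n + 1) 0 = 0) (hg1 : ∀ n, g (n + 1) 1 + g (n + 1) 0 = 0) :
    f = g := by
  funext n
  induction n with
  | zero => exact h0
  | succ n ih =>
    have hderiv : ∀ x, HasDerivAt (fun y => f (n + 1) y - g (n + 1) y) 0 x := fun x =>
      ((hf n x).sub (hg n x)).congr_deriv (by rw [ih, sub_self])
    have hconst : ∀ x, f (n + 1) x - g (n + 1) x = f (n + 1) 0 - g (n + 1) 0 := fun x =>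
      is_const_of_deriv_eq_zero (fun y => (hderiv y).differentiableAt) (fun y => (hderiv y).deriv)
        x 0
    funext x
    linarith [hconst x, hconst 1, hf1 n, hg1 n]

lemma eulerPoly_eq_bernoulliFun (m : ℕ) (x : ℝ) :
    eulerPoly m x = 2 ^ (m + 1) / (m + 1) *
      (bernoulliFun (m + 1) ((x + 1) / 2) - bernoulliFun (m + 1) (x / 2)) := by
  set g : ℕ → ℝ → ℝ := fun m x =>
    2 ^ (m + 1) / (m + 1) * (bernoulliFun (m + 1) ((x + 1) / 2) - bernoulliFun (m + 1) (x / 2))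
  suffices eulerPoly = g from congrFun (congrFun this m) x
  refine eq_of_hasDerivAt_of_add_eq_zero ?_ hasDerivAt_eulerPoly ?_
    eulerPoly_one_add_eulerPoly_zero ?_
  · funext x
    simp only [g, zero_add, eulerPoly_zero, bernoulliFun_one]
    ring
  · intro n x
    have h1 : HasDerivAt (fun y => bernoulliFun (n + 2) ((y + 1) / 2))
        ((n + 2 : ℕ) * bernoulliFun (n + 1) ((x + 1) / 2) * (1 / 2)) x := by
      have h := (hasDerivAt_bernoulliFun (n + 2) ((x + 1) / 2)).comp x
        (((hasDerivAt_id' x).add_const 1).div_const 2)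
      exact h
    have h2 : HasDerivAt (fun y => bernoulliFun (n + 2) (y / 2))
        ((n + 2 : ℕ) * bernoulliFun (n + 1) (x / 2) * (1 / 2)) x := by
      have h := (hasDerivAt_bernoulliFun (n + 2) (x / 2)).comp x ((hasDerivAt_id' x).div_const 2)
      exact h
    refine ((h1.sub h2).const_mul (2 ^ (n + 1 + 1) / ((n + 1 : ℕ) + 1 : ℝ))).congr_deriv ?_
    simp only [g]
    push_cast
    field_simp
    ring
  · intro n
    have hB := bernoulliFun_endpoints_eq_of_ne_one (k := n + 2) (by omega)
    simp only [g, zero_add, zero_div, show ((1 : ℝ) + 1) / 2 = 1 by norm_num]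
    linear_combination (2 ^ (n + 1 + 1) / (((n + 1 : ℕ) : ℝ) + 1)) * hB

lemma eq_neg_one_zpow_floor_mul_fract {f : ℝ → ℝ} (hf : Function.Antiperiodic f 1) (x : ℝ) :
    f x = (-1) ^ ⌊x⌋ * f (Int.fract x) := by
  have h := hf.add_int_mul_eq (x := Int.fract x) ⌊x⌋
  rwa [mul_one, Int.fract_add_floor, Int.cast_negOnePow] at h

lemma eulerFun_eq_bernoulliFun_fract (m : ℕ) (x : ℝ) :
    eulerFun m x = 2 ^ (m + 1) / (m + 1) * (bernoulliFun (m + 1) (Int.fract ((x + 1) / 2)) -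
      bernoulliFun (m + 1) (Int.fract (x / 2))) := by
  set F : ℝ → ℝ := fun x => 2 ^ (m + 1) / (m + 1) *
      (bernoulliFun (m + 1) (Int.fract ((x + 1) / 2)) - bernoulliFun (m + 1) (Int.fract (x / 2)))
  have hF : Function.Antiperiodic F 1 := fun x => by
    simp only [F, show (x + 1 + 1) / 2 = x / 2 + 1 by ring, Int.fract_add_one]
    ring
  have hF_fract : F (Int.fract x) = eulerPoly m (Int.fract x) := by
    have h0 := Int.fract_nonneg x
    have h1 := Int.fract_lt_one x
    simp only [F, eulerPoly_eq_bernoulliFun]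
    rw [Int.fract_eq_self.mpr (show 0 ≤ (Int.fract x + 1) / 2 ∧ (Int.fract x + 1) / 2 < 1 from
        ⟨by linarith, by linarith⟩),
      Int.fract_eq_self.mpr (show 0 ≤ Int.fract x / 2 ∧ Int.fract x / 2 < 1 from
        ⟨by linarith, by linarith⟩)]
  change eulerFun m x = F x
  rw [eq_neg_one_zpow_floor_mul_fract hF, hF_fract, eulerFun, Int.self_sub_floor]

lemma hasSum_fourier_bernoulliFun_fract {k : ℕ} (hk : 2 ≤ k) (y : ℝ) :
    HasSum (fun n : ℤ => 1 / (n : ℂ) ^ k * exp (2 * π * I * n * y))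
      (-(2 * π * I) ^ k / k ! * bernoulliFun k (Int.fract y)) := by
  simpa [fourier_coe_apply] using
    hasSum_one_div_pow_mul_fourier_mul_bernoulliFun hk ⟨Int.fract_nonneg y, (Int.fract_lt_one y).le⟩

lemma exp_two_pi_I_int_mul_add_half (n : ℤ) (y : ℂ) :
    exp (2 * π * I * n * (y + 1 / 2)) = (-1) ^ n * exp (2 * π * I * n * y) := by
  rw [show 2 * π * I * n * (y + 1 / 2) = n * (π * I) + 2 * π * I * n * y by ring, exp_add,
    exp_int_mul, exp_pi_mul_I]

lemma HasSum.comp_two_mul_add_one {α : Type*} [AddCommMonoid α] [TopologicalSpace α] {f : ℤ → α}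
    {a : α} (hf : HasSum f a) (heven : ∀ j, f (2 * j) = 0) : HasSum (fun j => f (2 * j + 1)) a := by
  refine (Function.Injective.hasSum_iff (fun i j h => by simpa using h) fun n hn => ?_).mpr hf
  obtain ⟨j, rfl⟩ : Even n := Int.not_odd_iff_even.mp fun ⟨j, hj⟩ => hn ⟨j, hj.symm⟩
  rw [← two_mul, heven]

lemma hasSum_eulerFun_fourier {m : ℕ} (hm : 1 ≤ m) (x : ℝ) :
    HasSum (fun n : ℤ => exp ((2 * n + 1) * π * I * x) / ((2 * n + 1) * π * I) ^ (m + 1))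
      (eulerFun m x / (2 * m !)) := by
  have hshift (n : ℤ) : exp (2 * π * I * n * ((x + 1) / 2 : ℝ)) =
      (-1) ^ n * exp (2 * π * I * n * (x / 2 : ℝ)) := by
    rw [← exp_two_pi_I_int_mul_add_half]
    push_cast
    ring_nf
  have hdiff := (hasSum_fourier_bernoulliFun_fract (k := m + 1) (by omega) ((x + 1) / 2)).sub
    (hasSum_fourier_bernoulliFun_fract (k := m + 1) (by omega) (x / 2))
  simp only [hshift] at hdiff
  have hodd := hdiff.comp_two_mul_add_one fun j => by
    rw [(even_two_mul j).neg_one_zpow, one_mul, sub_self]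
  have hπI : (π : ℂ) * I ≠ 0 := mul_ne_zero (ofReal_ne_zero.mpr Real.pi_ne_zero) I_ne_zero
  have hval : -1 / (2 * (π * I) ^ (m + 1)) *
      (-(2 * π * I) ^ (m + 1) / (m + 1)! * bernoulliFun (m + 1) (Int.fract ((x + 1) / 2)) -
        -(2 * π * I) ^ (m + 1) / (m + 1)! * bernoulliFun (m + 1) (Int.fract (x / 2))) =
      eulerFun m x / (2 * m !) := by
    rw [eulerFun_eq_bernoulliFun_fract, factorial_succ]
    push_cast
    field_simp
    ring
  rw [← hval]
  refine (hodd.mul_left _).congr_fun fun j => ?_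
  have hj : (2 * j + 1 : ℂ) ≠ 0 := by exact_mod_cast (by omega : 2 * j + 1 ≠ 0)
  have harg : 2 * π * I * ((2 * j + 1 : ℤ) : ℂ) * ((x / 2 : ℝ) : ℂ) = (2 * j + 1) * π * I * x := by
    push_cast
    ring
  rw [(odd_two_mul_add_one j).neg_one_zpow, harg, mul_assoc _ (π : ℂ) I, mul_pow]
  push_cast
  field_simp
  ring

/-- Fourier expansion of the Euler function: for `m ≥ 1` and real `x`,
`Ē_m(x) = 2·m!·∑_{n ∈ ℤ} e^{(2n+1)πix} / ((2n+1)πi)^{m+1}`, the series converging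
absolutely. -/
theorem eulerFun_fourier (m : ℕ) (hm : 1 ≤ m) (x : ℝ) :
    Summable (fun n : ℤ =>
      ‖Complex.exp ((2 * (n : ℂ) + 1) * (Real.pi : ℂ) * Complex.I * (x : ℂ)) /
          ((2 * (n : ℂ) + 1) * (Real.pi : ℂ) * Complex.I) ^ (m + 1)‖) ∧
    (eulerFun m x : ℂ) =
      2 * (m.factorial : ℂ) *
        ∑' n : ℤ,
          Complex.exp ((2 * (n : ℂ) + 1) * (Real.pi : ℂ) * Complex.I * (x : ℂ)) /
            ((2 * (n : ℂ) + 1) * (Real.pi : ℂ) * Complex.I) ^ (m + 1) := by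
  have H := hasSum_eulerFun_fourier hm x
  refine ⟨summable_norm_iff.mpr H.summable, ?_⟩
  rw [H.tsum_eq,
    mul_div_cancel₀ _ (mul_ne_zero two_ne_zero (Nat.cast_ne_zero.mpr m.factorial_ne_zero))]
end
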